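/- Let (P_s)_{s≥0} be a family of Markov transition operators on bounded measurable functions on ℝ^m, and suppose there exist β > 0 and C ≥ 0 such that for every bounded Lipschitz function φ : ℝ^m → ℝ and all y, z ∈ ℝ^m, s ≥ 0: |P_s φ(y) - P_s φ(z)| ≤ Lip(φ) C e^{-β s/2} (1 + |y| + |z|). If μ and ν are two invariant probability measures for (P_s) with finite first moments, then μ = ν. -/

import Mathlib

/-! For a bounded `L`-Lipschitz `φ`, invariance and the contraction bound (comparing both
integrals with `P_s φ 0`) give
`|∫ φ dμ - ∫ φ dν| = |∫ P_s φ dμ - ∫ P_s φ dν| ≤ L C e^{-βs/2} (2 + m₁(μ) + m₁(ν))`, where `m₁` is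
the first moment; letting `s → ∞`, `μ` and `ν` integrate every bounded Lipschitz function equally.
Thickened indicators of closed sets are such functions, so `μ` and `ν` agree on closed sets and
hence everywhere. -/

open MeasureTheory Filter Topology
open scoped NNReal

theorem ext_of_forall_integral_eq_of_lipschitz {X : Type*} [PseudoMetricSpace X] [MeasurableSpace X]
    [BorelSpace X] {μ ν : Measure X} [IsFiniteMeasure μ] [IsFiniteMeasure ν]
    (h : ∀ (f : X → ℝ) (L : ℝ≥0), LipschitzWith L f → (∃ M, ∀ x, |f x| ≤ M) →
      ∫ x, f x ∂μ = ∫ x, f x ∂ν) :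
    μ = ν := by
  have hδ : ∀ n : ℕ, 0 < 1 / ((n : ℝ) + 1) := fun _ ↦ Nat.one_div_pos_of_nat
  have hclosed : ∀ F : Set X, IsClosed F → μ F = ν F := by
    intro F hF
    have hμ := tendsto_integral_thickenedIndicator_of_isClosed μ hF hδ
      tendsto_one_div_add_atTop_nhds_zero_nat
    have hν := tendsto_integral_thickenedIndicator_of_isClosed ν hF hδ
      tendsto_one_div_add_atTop_nhds_zero_nat
    refine (measureReal_eq_measureReal_iff (measure_ne_top μ F) (measure_ne_top ν F)).1 ?_
    refine tendsto_nhds_unique (hμ.congr fun n ↦ h _ _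
      ((LipschitzWith.subtype_val _).comp (lipschitzWith_thickenedIndicator (hδ n) F))
      ⟨1, fun x ↦ (abs_of_nonneg (thickenedIndicator (hδ n) F x).2).trans_le
        (thickenedIndicator_le_one (hδ n) F x)⟩) hν
  refine ext_of_generate_finite _ ?_ isPiSystem_isClosed (fun F hF ↦ hclosed F hF)
    (hclosed _ isClosed_univ)
  rw [BorelSpace.measurable_eq (α := X), borel_eq_generateFrom_isClosed]

section FirstMoment

variable {E : Type*} [NormedAddCommGroup E] [MeasurableSpace E] {μ ν : Measure E}
  [IsProbabilityMeasure μ] [IsProbabilityMeasure ν]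

theorem abs_integral_sub_apply_zero_le {g : E → ℝ} {K : ℝ} (hg : Integrable g μ)
    (hμ1 : Integrable (fun y ↦ ‖y‖) μ) (hgK : ∀ y, |g y - g 0| ≤ K * (1 + ‖y‖)) :
    |∫ y, g y ∂μ - g 0| ≤ K * (1 + ∫ y, ‖y‖ ∂μ) :=
  calc |∫ y, g y ∂μ - g 0| = |∫ y, (g y - g 0) ∂μ| := by
        rw [integral_sub hg (integrable_const _), integral_const, probReal_univ, one_smul]
    _ ≤ ∫ y, |g y - g 0| ∂μ := abs_integral_le_integral_abs
    _ ≤ ∫ y, K * (1 + ‖y‖) ∂μ :=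
        integral_mono (hg.sub (integrable_const _)).abs
          (((integrable_const 1).add hμ1).const_mul K) hgK
    _ = K * (1 + ∫ y, ‖y‖ ∂μ) := by
        rw [integral_const_mul, integral_add (integrable_const _) hμ1, integral_const,
          probReal_univ, one_smul]

theorem abs_integral_sub_integral_le {g : E → ℝ} {K : ℝ} (hgμ : Integrable g μ)
    (hgν : Integrable g ν) (hμ1 : Integrable (fun y ↦ ‖y‖) μ) (hν1 : Integrable (fun y ↦ ‖y‖) ν)
    (hgK : ∀ y z, |g y - g z| ≤ K * (1 + ‖y‖ + ‖z‖)) :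
    |∫ y, g y ∂μ - ∫ y, g y ∂ν| ≤ K * (2 + ∫ y, ‖y‖ ∂μ + ∫ y, ‖y‖ ∂ν) := by
  have hgK₀ : ∀ y, |g y - g 0| ≤ K * (1 + ‖y‖) := fun y ↦ by simpa using hgK y 0
  calc |∫ y, g y ∂μ - ∫ y, g y ∂ν| ≤ |∫ y, g y ∂μ - g 0| + |∫ y, g y ∂ν - g 0| := by
        rw [abs_sub_comm (∫ y, g y ∂ν)]
        exact abs_sub_le _ _ _
    _ ≤ K * (1 + ∫ y, ‖y‖ ∂μ) + K * (1 + ∫ y, ‖y‖ ∂ν) :=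
        add_le_add (abs_integral_sub_apply_zero_le hgμ hμ1 hgK₀)
          (abs_integral_sub_apply_zero_le hgν hν1 hgK₀)
    _ = K * (2 + ∫ y, ‖y‖ ∂μ + ∫ y, ‖y‖ ∂ν) := by ring

/- Nothing guarantees that `T ψ` is integrable. Centering `φ` at the midpoint `c` of its two
integrals makes both integrals of `T (φ - c)` nonzero unless the claim is trivial, and a
function with nonzero Bochner integral is integrable. -/
theorem abs_integral_sub_le_of_invariant (T : (E → ℝ) → E → ℝ) {K : ℝ} {φ : E → ℝ}
    (hφμ : Integrable φ μ) (hφν : Integrable φ ν)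
    (hμ1 : Integrable (fun y ↦ ‖y‖) μ) (hν1 : Integrable (fun y ↦ ‖y‖) ν)
    (hTK : ∀ (c : ℝ) (y z : E),
      |T (fun x ↦ φ x - c) y - T (fun x ↦ φ x - c) z| ≤ K * (1 + ‖y‖ + ‖z‖))
    (hμT : ∀ c : ℝ, ∫ y, T (fun x ↦ φ x - c) y ∂μ = ∫ y, (φ y - c) ∂μ)
    (hνT : ∀ c : ℝ, ∫ y, T (fun x ↦ φ x - c) y ∂ν = ∫ y, (φ y - c) ∂ν) :
    |∫ y, φ y ∂μ - ∫ y, φ y ∂ν| ≤ K * (2 + ∫ y, ‖y‖ ∂μ + ∫ y, ‖y‖ ∂ν) := by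
  set a := ∫ y, φ y ∂μ
  set b := ∫ y, φ y ∂ν
  set c := (a + b) / 2
  by_cases hab : a = b
  · have hK : 0 ≤ K := by simpa using hTK 0 0 0
    rw [hab, sub_self, abs_zero]
    have hmoment (ρ : Measure E) : 0 ≤ ∫ y, ‖y‖ ∂ρ := integral_nonneg fun y ↦ norm_nonneg y
    exact mul_nonneg hK (by linarith [hmoment μ, hmoment ν])
  have hμc : ∫ y, (φ y - c) ∂μ = (a - b) / 2 := by
    rw [integral_sub hφμ (integrable_const c), integral_const, probReal_univ, one_smul]
    ring
  have hνc : ∫ y, (φ y - c) ∂ν = -((a - b) / 2) := by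
    rw [integral_sub hφν (integrable_const c), integral_const, probReal_univ, one_smul]
    ring
  have hne : (a - b) / 2 ≠ 0 := div_ne_zero (sub_ne_zero.2 hab) two_ne_zero
  have hTμ : Integrable (T fun x ↦ φ x - c) μ :=
    .of_integral_ne_zero (by rwa [hμT, hμc])
  have hTν : Integrable (T fun x ↦ φ x - c) ν :=
    .of_integral_ne_zero (by rwa [hνT, hνc, neg_ne_zero])
  calc |a - b| = |∫ y, T (fun x ↦ φ x - c) y ∂μ - ∫ y, T (fun x ↦ φ x - c) y ∂ν| := by
        rw [hμT, hνT, hμc, hνc]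
        ring_nf
    _ ≤ K * (2 + ∫ y, ‖y‖ ∂μ + ∫ y, ‖y‖ ∂ν) :=
        abs_integral_sub_integral_le hTμ hTν hμ1 hν1 (hTK c)

end FirstMoment

theorem stmt_12_general (m : ℕ)
    (P : ℝ → (EuclideanSpace ℝ (Fin m) → ℝ) → (EuclideanSpace ℝ (Fin m) → ℝ))
    (β C : ℝ) (hβ : 0 < β)
    (hcontr : ∀ (φ : EuclideanSpace ℝ (Fin m) → ℝ) (L : NNReal),
      LipschitzWith L φ → (∃ M, ∀ x, |φ x| ≤ M) →
      ∀ (y z : EuclideanSpace ℝ (Fin m)) (s : ℝ), 0 ≤ s →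
        |P s φ y - P s φ z| ≤ (L : ℝ) * C * Real.exp (-β * s / 2) * (1 + ‖y‖ + ‖z‖))
    (μ ν : Measure (EuclideanSpace ℝ (Fin m)))
    [IsProbabilityMeasure μ] [IsProbabilityMeasure ν]
    (hμ1 : Integrable (fun z => ‖z‖) μ) (hν1 : Integrable (fun z => ‖z‖) ν)
    (hμinv : ∀ s : ℝ, 0 ≤ s → ∀ (φ : EuclideanSpace ℝ (Fin m) → ℝ),
      Measurable φ → (∃ M, ∀ x, |φ x| ≤ M) → ∫ y, P s φ y ∂μ = ∫ y, φ y ∂μ)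
    (hνinv : ∀ s : ℝ, 0 ≤ s → ∀ (φ : EuclideanSpace ℝ (Fin m) → ℝ),
      Measurable φ → (∃ M, ∀ x, |φ x| ≤ M) → ∫ y, P s φ y ∂ν = ∫ y, φ y ∂ν) :
    μ = ν := by
  refine ext_of_forall_integral_eq_of_lipschitz fun φ L hL ⟨M, hM⟩ ↦ ?_
  have hφ_int {ρ : Measure (EuclideanSpace ℝ (Fin m))} [IsProbabilityMeasure ρ] :
      Integrable φ ρ := .of_bound hL.continuous.aestronglyMeasurable M (ae_of_all _ hM)
  have hψL (c : ℝ) : LipschitzWith L fun x ↦ φ x - c :=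
    .of_dist_le_mul fun x y ↦ by simpa [Real.dist_eq] using hL.dist_le_mul x y
  have hψ_bdd (c : ℝ) : ∃ M', ∀ x, |φ x - c| ≤ M' :=
    ⟨M + |c|, fun x ↦ (abs_sub _ _).trans (add_le_add_left (hM x) _)⟩
  set B := 2 + ∫ y, ‖y‖ ∂μ + ∫ y, ‖y‖ ∂ν
  have hbound : ∀ s ≥ 0, |∫ x, φ x ∂μ - ∫ x, φ x ∂ν| ≤ L * C * Real.exp (-β * s / 2) * B :=
    fun s hs ↦ abs_integral_sub_le_of_invariant (P s) hφ_int hφ_int hμ1 hν1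
      (fun c y z ↦ hcontr _ L (hψL c) (hψ_bdd c) y z s hs)
      (fun c ↦ hμinv s hs _ (hψL c).continuous.measurable (hψ_bdd c))
      (fun c ↦ hνinv s hs _ (hψL c).continuous.measurable (hψ_bdd c))
  have hdecay : Tendsto (fun s ↦ L * C * Real.exp (-β * s / 2) * B) atTop (𝓝 0) := by
    have hexp : Tendsto (fun s ↦ Real.exp (-β * s / 2)) atTop (𝓝 0) :=
      Real.tendsto_exp_atBot.comp <|
        (tendsto_id.const_mul_atTop_of_neg (neg_lt_zero.2 hβ)).atBot_div_const two_pos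
    simpa using (hexp.const_mul (L * C)).mul_const B
  have hle : |∫ x, φ x ∂μ - ∫ x, φ x ∂ν| ≤ 0 :=
    ge_of_tendsto hdecay ((eventually_ge_atTop 0).mono hbound)
  exact sub_eq_zero.1 (abs_nonpos_iff.1 hle)

theorem stmt_12 (m : ℕ)
    (P : ℝ → (EuclideanSpace ℝ (Fin m) → ℝ) → (EuclideanSpace ℝ (Fin m) → ℝ))
    (β C : ℝ) (hβ : 0 < β) (hC : 0 ≤ C)
    (hcontr : ∀ (φ : EuclideanSpace ℝ (Fin m) → ℝ) (L : NNReal),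
      LipschitzWith L φ → (∃ M, ∀ x, |φ x| ≤ M) →
      ∀ (y z : EuclideanSpace ℝ (Fin m)) (s : ℝ), 0 ≤ s →
        |P s φ y - P s φ z| ≤ (L : ℝ) * C * Real.exp (-β * s / 2) * (1 + ‖y‖ + ‖z‖))
    (μ ν : Measure (EuclideanSpace ℝ (Fin m)))
    [IsProbabilityMeasure μ] [IsProbabilityMeasure ν]
    (hμ1 : Integrable (fun z => ‖z‖) μ) (hν1 : Integrable (fun z => ‖z‖) ν)
    (hμinv : ∀ s : ℝ, 0 ≤ s → ∀ (φ : EuclideanSpace ℝ (Fin m) → ℝ),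
      Measurable φ → (∃ M, ∀ x, |φ x| ≤ M) → ∫ y, P s φ y ∂μ = ∫ y, φ y ∂μ)
    (hνinv : ∀ s : ℝ, 0 ≤ s → ∀ (φ : EuclideanSpace ℝ (Fin m) → ℝ),
      Measurable φ → (∃ M, ∀ x, |φ x| ≤ M) → ∫ y, P s φ y ∂ν = ∫ y, φ y ∂ν) :
    μ = ν :=
  stmt_12_general m P β C hβ hcontr μ ν hμ1 hν1 hμinv hνinv
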